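/- For every integer N ≥ 2, the quantum chained Bell value satisfies 2N·sin²(π/(4N)) < 1, i.e., quantum mechanics violates the chained Bell inequality I_N ≥ 1. -/
import Mathlib


/-- For every integer `N ≥ 2`, the quantum chained Bell value satisfies
`2N·sin²(π/(4N)) < 1`, i.e. quantum mechanics violates the chained
Bell inequality `I_N ≥ 1`. -/
theorem quantum_violates_chained_bell (N : ℕ) (hN : 2 ≤ N) :
    2 * (N : ℝ) * Real.sin (Real.pi / (4 * N)) ^ 2 < 1 := by
  have hN' : (2 : ℝ) ≤ N := by exact_mod_cast hN
  have hNpos : (0 : ℝ) < N := by linarith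
  have hx : (0 : ℝ) < Real.pi / (4 * N) :=
    div_pos Real.pi_pos (by linarith)
  have hsin : Real.sin (Real.pi / (4 * N)) < Real.pi / (4 * N) := Real.sin_lt hx
  have hsin0 : 0 ≤ Real.sin (Real.pi / (4 * N)) := by
    apply Real.sin_nonneg_of_nonneg_of_le_pi hx.le
    rw [div_le_iff₀ (by linarith : (0:ℝ) < 4 * N)]
    nlinarith [Real.pi_pos]
  have hsq : Real.sin (Real.pi / (4 * N)) ^ 2 < (Real.pi / (4 * N)) ^ 2 := by
    nlinarith
  have hpi : Real.pi < 3.15 := by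
    have := Real.pi_lt_d2
    linarith
  have h1 : 2 * (N : ℝ) * (Real.pi / (4 * N)) ^ 2 = Real.pi ^ 2 / (8 * N) := by
    field_simp
    ring
  have h2 : Real.pi ^ 2 / (8 * N) < 1 := by
    rw [div_lt_one (by linarith)]
    nlinarith [Real.pi_pos]
  nlinarith
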